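/- arXiv:2501.09735 — 8 statements merged into one kernel-verified Lean document; each statement's English description precedes it below -/
import Mathlib

section
/- Let θ̄ = min_{x ∈ S} f(x)/g(x) and F(θ) = min_{x ∈ S} (f(x) − θ g(x)). Then F(θ̄) = 0; moreover, for any θ̂ ∈ ℝ, if F(θ̂) = 0 then θ̂ = θ̄. -/
/-!
Because `g > 0` on `S`, the inequality `θ ≤ f x / g x` is equivalent to `0 ≤ f x - θ * g x`,
with equality in one exactly when there is equality in the other. Hence `θ` is the least ratio
on `S` if and only if `0` is the least value of `f - θ g` on `S`; both claims follow from the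
uniqueness of least elements.
-/

open Set

section

variable {α : Type*} {S : Set α}

theorem isLeast_image_iff {β : Type*} [Preorder β] {u : α → β} {a : β} :
    IsLeast (u '' S) a ↔ (∃ x ∈ S, u x = a) ∧ ∀ x ∈ S, a ≤ u x :=
  and_congr Iff.rfl forall_mem_image

theorem isLeast_div_image_iff_isLeast_sub_mul_image {f g : α → ℝ} (hg : ∀ x ∈ S, 0 < g x)
    {θ : ℝ} :
    IsLeast ((fun x => f x / g x) '' S) θ ↔ IsLeast ((fun x => f x - θ * g x) '' S) 0 := by
  simp only [isLeast_image_iff]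
  refine and_congr (exists_congr fun x => and_congr_right fun hx => ?_)
    (forall₂_congr fun x hx => ?_)
  · rw [div_eq_iff (hg x hx).ne', sub_eq_zero, mul_comm]
  · rw [le_div_iff₀ (hg x hx), sub_nonneg]

end

theorem dinkelbach_root_characterization_general
    {n : ℕ}
    (S : Set (EuclideanSpace ℝ (Fin n)))
    (f g : EuclideanSpace ℝ (Fin n) → ℝ)
    (hgpos : ∀ x ∈ S, 0 < g x)
    (θbar : ℝ) (hθbar : IsLeast ((fun x => f x / g x) '' S) θbar)
    (F : ℝ → ℝ) (hF : ∀ θ : ℝ, IsLeast ((fun x => f x - θ * g x) '' S) (F θ)) :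
    F θbar = 0 ∧ ∀ θhat : ℝ, F θhat = 0 → θhat = θbar := by
  have key (θ : ℝ) := isLeast_div_image_iff_isLeast_sub_mul_image (f := f) hgpos (θ := θ)
  refine ⟨(hF θbar).unique ((key θbar).mp hθbar), fun θhat hroot => ?_⟩
  have hθhat : IsLeast ((fun x => f x / g x) '' S) θhat := (key θhat).mpr (hroot ▸ hF θhat)
  exact hθhat.unique hθbar

theorem dinkelbach_root_characterization
    {n : ℕ} (hn : 1 ≤ n)
    (S : Set (EuclideanSpace ℝ (Fin n))) (hS : S.Nonempty) (hSc : IsCompact S)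
    (f g : EuclideanSpace ℝ (Fin n) → ℝ)
    (hf : Continuous f) (hg : Continuous g) (hgpos : ∀ x ∈ S, 0 < g x)
    (θbar : ℝ) (hθbar : IsLeast ((fun x => f x / g x) '' S) θbar)
    (F : ℝ → ℝ) (hF : ∀ θ : ℝ, IsLeast ((fun x => f x - θ * g x) '' S) (F θ)) :
    F θbar = 0 ∧ ∀ θhat : ℝ, F θhat = 0 → θhat = θbar :=
  dinkelbach_root_characterization_general S f g hgpos θbar hθbar F hF
end

section
/- A point x* ∈ S attains the minimum of x ↦ f(x)/g(x) over S if and only if x* attains the minimum of x ↦ f(x) − θ̄ g(x) over S, where θ̄ = min_{x ∈ S} f(x)/g(x). -/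
/-!
Since `g > 0` on `S`, `θ ≤ f x / g x` is equivalent to `0 ≤ f x - θ * g x`, with equality on both
sides simultaneously. Hence `F(θ̄) = 0` and both problems are minimized exactly at the points
where `f x / g x = θ̄`.
-/

section Dinkelbach

variable {α : Type*} {S : Set α} {f g : α → ℝ} {θ : ℝ}

theorem forall_le_iff_eq_of_isLeast_image {β : Type*} [PartialOrder β] {φ : α → β} {m : β}
    (h : IsLeast (φ '' S) m) {x : α} (hx : x ∈ S) : (∀ y ∈ S, φ x ≤ φ y) ↔ φ x = m := by
  constructor
  · intro hmin
    obtain ⟨y, hy, rfl⟩ := h.1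
    exact le_antisymm (hmin y hy) (h.2 ⟨x, hx, rfl⟩)
  · rintro hxm y hy
    exact hxm ▸ h.2 ⟨y, hy, rfl⟩

theorem le_div_iff_sub_mul_nonneg {a b : ℝ} (hb : 0 < b) : θ ≤ a / b ↔ 0 ≤ a - θ * b := by
  rw [le_div_iff₀ hb, sub_nonneg]

theorem div_eq_iff_sub_mul_eq_zero {a b : ℝ} (hb : b ≠ 0) : a / b = θ ↔ a - θ * b = 0 := by
  rw [div_eq_iff hb, sub_eq_zero, mul_comm]

theorem isLeast_sub_mul_image_zero (hg : ∀ x ∈ S, 0 < g x)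
    (hθ : IsLeast ((fun x => f x / g x) '' S) θ) :
    IsLeast ((fun x => f x - θ * g x) '' S) 0 := by
  obtain ⟨⟨y, hy, hyθ⟩, hlower⟩ := hθ
  refine ⟨⟨y, hy, (div_eq_iff_sub_mul_eq_zero (hg y hy).ne').mp hyθ⟩, ?_⟩
  rintro _ ⟨x, hx, rfl⟩
  exact (le_div_iff_sub_mul_nonneg (hg x hx)).mp (hlower ⟨x, hx, rfl⟩)

end Dinkelbach

theorem dinkelbach_same_minimizers_general
    {n : ℕ}
    (S : Set (EuclideanSpace ℝ (Fin n)))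
    (f g : EuclideanSpace ℝ (Fin n) → ℝ)
    (hgpos : ∀ x ∈ S, 0 < g x)
    (θbar : ℝ) (hθbar : IsLeast ((fun x => f x / g x) '' S) θbar)
    (xstar : EuclideanSpace ℝ (Fin n)) (hxstar : xstar ∈ S) :
    (∀ x ∈ S, f xstar / g xstar ≤ f x / g x) ↔
      (∀ x ∈ S, f xstar - θbar * g xstar ≤ f x - θbar * g x) :=
  (forall_le_iff_eq_of_isLeast_image hθbar hxstar).trans <|
    (div_eq_iff_sub_mul_eq_zero (hgpos xstar hxstar).ne').trans
      (forall_le_iff_eq_of_isLeast_image (isLeast_sub_mul_image_zero hgpos hθbar) hxstar).symm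

theorem dinkelbach_same_minimizers
    {n : ℕ} (hn : 1 ≤ n)
    (S : Set (EuclideanSpace ℝ (Fin n))) (hS : S.Nonempty) (hSc : IsCompact S)
    (f g : EuclideanSpace ℝ (Fin n) → ℝ)
    (hf : Continuous f) (hg : Continuous g) (hgpos : ∀ x ∈ S, 0 < g x)
    (θbar : ℝ) (hθbar : IsLeast ((fun x => f x / g x) '' S) θbar)
    (xstar : EuclideanSpace ℝ (Fin n)) (hxstar : xstar ∈ S) :
    (∀ x ∈ S, f xstar / g xstar ≤ f x / g x) ↔
      (∀ x ∈ S, f xstar - θbar * g xstar ≤ f x - θbar * g x) :=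
  dinkelbach_same_minimizers_general S f g hgpos θbar hθbar xstar hxstar
end

section
/- Consider the Dinkelbach iteration: choose x⁰ ∈ S, set θ₁ = f(x⁰)/g(x⁰), and for each k ≥ 1 choose x^k attaining the minimum of x ↦ f(x) − θ_k g(x) over S and set θ_{k+1} = f(x^k)/g(x^k). Then for all k ≥ 1: θ_k ≥ θ_{k+1} ≥ θ̄ and F(θ_k) ≤ F(θ_{k+1}) ≤ 0. -/
theorem dinkelbach_iteration_monotone
    {n : ℕ} (hn : 1 ≤ n)
    (S : Set (EuclideanSpace ℝ (Fin n))) (hS : S.Nonempty) (hSc : IsCompact S)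
    (f g : EuclideanSpace ℝ (Fin n) → ℝ)
    (hf : Continuous f) (hg : Continuous g) (hgpos : ∀ x ∈ S, 0 < g x)
    (θbar : ℝ) (hθbar : IsLeast ((fun x => f x / g x) '' S) θbar)
    (F : ℝ → ℝ) (hF : ∀ θ : ℝ, IsLeast ((fun x => f x - θ * g x) '' S) (F θ))
    (x : ℕ → EuclideanSpace ℝ (Fin n)) (θ : ℕ → ℝ)
    (hx0 : x 0 ∈ S) (hθ1 : θ 1 = f (x 0) / g (x 0))
    (hxk : ∀ k : ℕ, 1 ≤ k → x k ∈ S ∧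
      ∀ y ∈ S, f (x k) - θ k * g (x k) ≤ f y - θ k * g y)
    (hθk : ∀ k : ℕ, 1 ≤ k → θ (k + 1) = f (x k) / g (x k)) :
    ∀ k : ℕ, 1 ≤ k →
      (θ (k + 1) ≤ θ k ∧ θbar ≤ θ (k + 1)) ∧
      (F (θ k) ≤ F (θ (k + 1)) ∧ F (θ (k + 1)) ≤ 0) := by
  have ratio_zero : ∀ y ∈ S, f y - (f y / g y) * g y = 0 := by
    intro y hy
    field_simp [ne_of_gt (hgpos y hy)]
    ring
  have hθratio : ∀ k : ℕ, 1 ≤ k → ∃ y ∈ S, θ k = f y / g y := by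
    intro k hk
    match k, hk with
    | 1, _ => exact ⟨x 0, hx0, hθ1⟩
    | (m+2), _ =>
      exact ⟨x (m+1), (hxk (m+1) (by omega)).1, hθk (m+1) (by omega)⟩
  have Fle0 : ∀ k : ℕ, 1 ≤ k → F (θ k) ≤ 0 := by
    intro k hk
    obtain ⟨y, hy, hyeq⟩ := hθratio k hk
    have h1 : F (θ k) ≤ f y - θ k * g y := (hF (θ k)).2 ⟨y, hy, rfl⟩
    rw [hyeq] at h1 ⊢
    rw [ratio_zero y hy] at h1
    exact h1
  have Fmono : ∀ a b : ℝ, a ≤ b → F b ≤ F a := by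
    intro a b hab
    obtain ⟨z, hz, hza⟩ := (hF a).1
    have h1 : F b ≤ f z - b * g z := (hF b).2 ⟨z, hz, rfl⟩
    have h2 : f z - b * g z ≤ f z - a * g z := by
      nlinarith [hgpos z hz]
    have hza' : f z - a * g z = F a := hza
    linarith
  have Fval : ∀ k : ℕ, 1 ≤ k → F (θ k) = f (x k) - θ k * g (x k) := by
    intro k hk
    refine le_antisymm ((hF (θ k)).2 ⟨x k, (hxk k hk).1, rfl⟩) ?_
    obtain ⟨z, hz, hza⟩ := (hF (θ k)).1
    rw [← hza]
    exact (hxk k hk).2 z hz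
  intro k hk
  have hxkS : x k ∈ S := (hxk k hk).1
  have hgk := hgpos (x k) hxkS
  have hθk1 := hθk k hk
  have hle : θ (k+1) ≤ θ k := by
    have h0 : f (x k) - θ k * g (x k) ≤ 0 := by
      rw [← Fval k hk]; exact Fle0 k hk
    rw [hθk1, div_le_iff₀ hgk]
    nlinarith
  refine ⟨⟨hle, ?_⟩, ?_, Fle0 (k+1) (by omega)⟩
  · rw [hθk1]
    exact hθbar.2 ⟨x k, hxkS, rfl⟩
  · exact Fmono (θ (k+1)) (θ k) hle
end

section
/- If x* ∈ S attains the minimum of x ↦ f(x)/g(x) over the unit sphere S, and θ̄ = f(x*)/g(x*), then ∇f(x*) − θ̄ ∇g(x*) = 0 (the zero vector). -/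
lemma mvpoly_diffAt {n : ℕ} (P : MvPolynomial (Fin n) ℝ) (x : EuclideanSpace ℝ (Fin n)) :
    DifferentiableAt ℝ (fun y : EuclideanSpace ℝ (Fin n) => MvPolynomial.eval y P) x := by
  have h : ∀ i, AnalyticAt ℝ (fun y : EuclideanSpace ℝ (Fin n) => y i) x :=
    fun i => (EuclideanSpace.proj i : EuclideanSpace ℝ (Fin n) →L[ℝ] ℝ).analyticAt x
  have := AnalyticAt.aeval_mvPolynomial h P
  simp only [MvPolynomial.aeval_def, MvPolynomial.eval] at this ⊢
  exact this.differentiableAt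

theorem gradient_condition_at_min_of_ratio
    {n m : ℕ} (hn : 1 ≤ n) (hm : 1 ≤ m)
    (f g : EuclideanSpace ℝ (Fin n) → ℝ)
    (hfpoly : ∃ P : MvPolynomial (Fin n) ℝ, ∀ x, f x = MvPolynomial.eval x P)
    (hgpoly : ∃ Q : MvPolynomial (Fin n) ℝ, ∀ x, g x = MvPolynomial.eval x Q)
    (hfhom : ∀ (t : ℝ) (x : EuclideanSpace ℝ (Fin n)), f (t • x) = t ^ m * f x)
    (hghom : ∀ (t : ℝ) (x : EuclideanSpace ℝ (Fin n)), g (t • x) = t ^ m * g x)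
    (hgpos : ∀ x : EuclideanSpace ℝ (Fin n), x ≠ 0 → 0 < g x)
    (xstar : EuclideanSpace ℝ (Fin n)) (hxstar : ‖xstar‖ = 1)
    (hmin : ∀ x : EuclideanSpace ℝ (Fin n), ‖x‖ = 1 →
      f xstar / g xstar ≤ f x / g x) :
    gradient f xstar - (f xstar / g xstar) • gradient g xstar = 0 := by
  set θ : ℝ := f xstar / g xstar with hθ
  have hxne : xstar ≠ 0 := by
    intro h; rw [h, norm_zero] at hxstar; norm_num at hxstar
  have hgx : 0 < g xstar := hgpos xstar hxne
  -- differentiability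
  obtain ⟨P, hP⟩ := hfpoly
  obtain ⟨Q, hQ⟩ := hgpoly
  have hfd : DifferentiableAt ℝ f xstar := by
    have := mvpoly_diffAt P xstar
    exact this.congr_of_eventuallyEq (Filter.Eventually.of_forall fun y => (hP y))
  have hgd : DifferentiableAt ℝ g xstar := by
    have := mvpoly_diffAt Q xstar
    exact this.congr_of_eventuallyEq (Filter.Eventually.of_forall fun y => (hQ y))
  -- key inequality: h x := f x - θ * g x ≥ 0 everywhere
  have hkey : ∀ x : EuclideanSpace ℝ (Fin n), 0 ≤ f x - θ * g x := by
    intro x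
    by_cases hx : x = 0
    · have hf0 : f 0 = 0 := by
        have := hfhom 0 0
        simpa [zero_pow (Nat.one_le_iff_ne_zero.mp hm)] using this
      have hg0 : g 0 = 0 := by
        have := hghom 0 0
        simpa [zero_pow (Nat.one_le_iff_ne_zero.mp hm)] using this
      simp [hx, hf0, hg0]
    · have hnx : (0:ℝ) < ‖x‖ := norm_pos_iff.mpr hx
      set t : ℝ := ‖x‖⁻¹ with ht
      have htpos : 0 < t := inv_pos.mpr hnx
      have hu : ‖t • x‖ = 1 := by
        rw [norm_smul, Real.norm_eq_abs, abs_of_pos htpos, ht]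
        field_simp
      have h1 := hmin (t • x) hu
      have hgu : 0 < g (t • x) := by
        apply hgpos
        intro h
        rw [h, norm_zero] at hu; norm_num at hu
      have h2 : θ * g (t • x) ≤ f (t • x) := by
        rw [le_div_iff₀ hgu] at h1
        linarith
      rw [hfhom t x, hghom t x] at h2
      have htm : 0 < t ^ m := pow_pos htpos m
      nlinarith
  have hzero : f xstar - θ * g xstar = 0 := by
    rw [hθ]; field_simp; ring
  -- xstar is a global min of h
  have hlmin : IsLocalMin (fun x => f x - θ * g x) xstar := by
    apply IsMinOn.isLocalMin (s := Set.univ)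
    · intro y _
      have := hkey y
      simp only [Set.mem_setOf_eq]
      show f xstar - θ * g xstar ≤ f y - θ * g y
      linarith
    · exact Filter.univ_mem
  have hfderiv : fderiv ℝ (fun x => f x - θ * g x) xstar = 0 :=
    hlmin.fderiv_eq_zero
  have hsub : fderiv ℝ (fun x => f x - θ * g x) xstar
      = fderiv ℝ f xstar - θ • fderiv ℝ g xstar := by
    rw [fderiv_fun_sub hfd (hgd.const_mul θ), fderiv_const_mul hgd]
  have hEq : fderiv ℝ f xstar - θ • fderiv ℝ g xstar = 0 := by
    rw [← hsub]; exact hfderiv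
  show gradient f xstar - θ • gradient g xstar = 0
  unfold gradient
  rw [← map_smul, ← map_sub, hEq, map_zero]
end

section
/- Let x̄ ∈ S be a KKT point of the problem min_{x ∈ S} f(x)/g(x), i.e., there exists λ ∈ ℝ with ∇(f/g)(x̄) = λ x̄, and suppose f(x̄)/g(x̄) ≠ θ̄. Then the following are equivalent: (a) x̄ is a KKT point of min_{x ∈ S}(f(x) − θ̄ g(x)), i.e., there exists μ ∈ ℝ with ∇f(x̄) − θ̄ ∇g(x̄) = μ x̄; (b) ∇g(x̄) is a scalar multiple of x̄ (equivalently, x̄ is a Z-eigenvector of the symmetric coefficient tensor G of g, since ∇g(x̄) = m G x̄^{m−1}). -/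
open MvPolynomial in
theorem mvpoly_differentiableAt_aux {n : ℕ} (P : MvPolynomial (Fin n) ℝ)
    (z : EuclideanSpace ℝ (Fin n)) :
    DifferentiableAt ℝ (fun x : EuclideanSpace ℝ (Fin n) => MvPolynomial.eval x P) z := by
  have h : AnalyticAt ℝ (fun x : EuclideanSpace ℝ (Fin n) => (aeval (fun i => x i) P : ℝ)) z := by
    apply AnalyticAt.aeval_mvPolynomial (f := fun (x : EuclideanSpace ℝ (Fin n)) i => x i)
    intro i
    exact (EuclideanSpace.proj (𝕜 := ℝ) (ι := Fin n) i).analyticAt z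
  have he : (fun x : EuclideanSpace ℝ (Fin n) => MvPolynomial.eval x P) =
      fun x : EuclideanSpace ℝ (Fin n) => (aeval (fun i => x i) P : ℝ) := by
    funext x
    rw [aeval_def, eval, Algebra.algebraMap_self]
    rfl
  rw [he]
  exact h.differentiableAt

open InnerProductSpace in
theorem kkt_equivalence_Z_eigenvector
    {n m : ℕ} (hn : 1 ≤ n) (hm : 1 ≤ m)
    (f g : EuclideanSpace ℝ (Fin n) → ℝ)
    (hfpoly : ∃ P : MvPolynomial (Fin n) ℝ, ∀ x, f x = MvPolynomial.eval x P)
    (hgpoly : ∃ Q : MvPolynomial (Fin n) ℝ, ∀ x, g x = MvPolynomial.eval x Q)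
    (hfhom : ∀ (t : ℝ) (x : EuclideanSpace ℝ (Fin n)), f (t • x) = t ^ m * f x)
    (hghom : ∀ (t : ℝ) (x : EuclideanSpace ℝ (Fin n)), g (t • x) = t ^ m * g x)
    (hgpos : ∀ x : EuclideanSpace ℝ (Fin n), x ≠ 0 → 0 < g x)
    (θbar : ℝ)
    (hθbar : IsLeast ((fun x => f x / g x) ''
      {x : EuclideanSpace ℝ (Fin n) | ‖x‖ = 1}) θbar)
    (xbar : EuclideanSpace ℝ (Fin n)) (hxbar : ‖xbar‖ = 1)
    (hKKT : ∃ lam : ℝ, gradient (fun x => f x / g x) xbar = lam • xbar)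
    (hne : f xbar / g xbar ≠ θbar) :
    (∃ μ : ℝ, gradient f xbar - θbar • gradient g xbar = μ • xbar) ↔
      (∃ a : ℝ, gradient g xbar = a • xbar) := by
  obtain ⟨P, hP⟩ := hfpoly
  obtain ⟨Q, hQ⟩ := hgpoly
  have hx0 : xbar ≠ 0 := by
    intro h; rw [h, norm_zero] at hxbar; exact one_ne_zero hxbar.symm
  have hg0 : g xbar ≠ 0 := ne_of_gt (hgpos xbar hx0)
  have hdf : DifferentiableAt ℝ f xbar := by
    have hfe : f = fun x : EuclideanSpace ℝ (Fin n) => MvPolynomial.eval x P := funext hP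
    rw [hfe]; exact mvpoly_differentiableAt_aux P xbar
  have hdg : DifferentiableAt ℝ g xbar := by
    have hge : g = fun x : EuclideanSpace ℝ (Fin n) => MvPolynomial.eval x Q := funext hQ
    rw [hge]; exact mvpoly_differentiableAt_aux Q xbar
  set u := gradient f xbar with hu_def
  set v := gradient g xbar with hv_def
  have hu : HasFDerivAt f (toDual ℝ _ u) xbar :=
    hasGradientAt_iff_hasFDerivAt.mp hdf.hasGradientAt
  have hv : HasFDerivAt g (toDual ℝ _ v) xbar :=
    hasGradientAt_iff_hasFDerivAt.mp hdg.hasGradientAt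
  have hinv : HasFDerivAt (fun y => (g y)⁻¹) ((-(g xbar ^ 2)⁻¹) • (toDual ℝ _ v)) xbar := by
    have h1 : HasDerivAt (fun y : ℝ => y⁻¹) (-(g xbar ^ 2)⁻¹) (g xbar) := hasDerivAt_inv hg0
    exact h1.comp_hasFDerivAt xbar hv
  have hq' : HasFDerivAt (fun y => f y / g y)
      (f xbar • ((-(g xbar ^ 2)⁻¹) • (toDual ℝ _ v)) + (g xbar)⁻¹ • (toDual ℝ _ u)) xbar := by
    have hmul := hu.mul hinv
    simpa only [div_eq_mul_inv, Pi.mul_def] using hmul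
  have hqg : HasGradientAt (fun y => f y / g y)
      ((-(f xbar * (g xbar ^ 2)⁻¹)) • v + (g xbar)⁻¹ • u) xbar := by
    rw [hasGradientAt_iff_hasFDerivAt]
    have : (toDual ℝ (EuclideanSpace ℝ (Fin n)))
        ((-(f xbar * (g xbar ^ 2)⁻¹)) • v + (g xbar)⁻¹ • u) =
        f xbar • ((-(g xbar ^ 2)⁻¹) • (toDual ℝ _ v)) + (g xbar)⁻¹ • (toDual ℝ _ u) := by
      simp [smul_smul, map_add, map_smul, mul_neg, neg_mul]
    rw [this]
    exact hq'
  obtain ⟨lam, hlam⟩ := hKKT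
  have heq : (-(f xbar * (g xbar ^ 2)⁻¹)) • v + (g xbar)⁻¹ • u = lam • xbar := by
    rw [← hqg.gradient]; exact hlam
  have hu2 : u = (lam * g xbar) • xbar + (f xbar / g xbar) • v := by
    have h := congrArg (fun w : EuclideanSpace ℝ (Fin n) => (g xbar) • w) heq
    simp only [smul_add, smul_smul] at h
    rw [mul_inv_cancel₀ hg0, one_smul] at h
    have e2 : g xbar * -(f xbar * (g xbar ^ 2)⁻¹) = -(f xbar / g xbar) := by
      field_simp
    rw [e2] at h
    -- h : -(f xbar / g xbar) • v + u = (g xbar * lam) • xbar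
    linear_combination (norm := module) h
  have hc : (f xbar / g xbar - θbar) ≠ 0 := sub_ne_zero.mpr hne
  constructor
  · rintro ⟨μ, hμ⟩
    refine ⟨(f xbar / g xbar - θbar)⁻¹ * (μ - lam * g xbar), ?_⟩
    have h3 : (f xbar / g xbar - θbar) • v = (μ - lam * g xbar) • xbar := by
      rw [hu2] at hμ
      linear_combination (norm := module) hμ
    have h4 := congrArg (fun w : EuclideanSpace ℝ (Fin n) =>
      (f xbar / g xbar - θbar)⁻¹ • w) h3
    simp only [smul_smul, inv_mul_cancel₀ hc, one_smul] at h4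
    exact h4
  · rintro ⟨a, ha⟩
    refine ⟨lam * g xbar + (f xbar / g xbar - θbar) * a, ?_⟩
    rw [hu2, ha]
    module
end

section
/- For every symmetric d-linear form A on ℝⁿ, the maximum of |A[x]^d| over the unit sphere equals the maximum of |A(x₁,…,x_d)| over all d-tuples of unit vectors: max_{‖x‖=1} |A(x,…,x)| = max_{‖x₁‖=⋯=‖x_d‖=1} |A(x₁,…,x_d)|. -/
/-!
Take, among the unit tuples `x` at which `|A|` is maximal, one with `‖∑ k, x k‖` as large as
possible (the maximizers form a compact set). Flipping the sign of one entry keeps it a maximizer,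
so `⟪∑ k, x k, x j⟫ ≥ 1` for every `j`. If two entries `x i ≠ x j` remained, freeze all other
slots: `A` becomes a symmetric bilinear form `B`, and polarization
`4 B(x i, x j) = B(a, a) - B(b, b)` with `a = x i + x j`, `b = x i - x j`, `‖a‖² + ‖b‖² = 4`
shows that `|B(u, u)|` is maximal for `u = a / ‖a‖`. Putting `u` in both slots changes the sum by
`(2 / ‖a‖ - 1) • a`, which makes it strictly longer since `‖a‖ < 2` and `⟪∑ k, x k, a⟫ ≥ 2`.
Hence the chosen maximizer is constant.
-/

open scoped RealInnerProductSpace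
open Function

namespace LinearMap.BilinForm

section CommRing

variable {R M : Type*} [CommRing R] [AddCommGroup M] [Module R M] {B : LinearMap.BilinForm R M}

lemma four_mul_apply_eq_sub (hB : B.IsSymm) (x y : M) :
    4 * B x y = B (x + y) (x + y) - B (x - y) (x - y) := by
  have hyx : B y x = B x y := hB.eq y x
  simp only [map_add, map_sub, LinearMap.add_apply, LinearMap.sub_apply, hyx]
  ring

lemma apply_smul_self (c : R) (x : M) : B (c • x) (c • x) = c ^ 2 * B x x := by
  simp only [map_smul, smul_apply, smul_eq_mul]; ring

end CommRing

variable {E : Type*} [NormedAddCommGroup E] [InnerProductSpace ℝ E] {B : LinearMap.BilinForm ℝ E}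

lemma abs_apply_self_le_mul_norm_sq {M : ℝ} (hM : ∀ w : E, ‖w‖ = 1 → |B w w| ≤ M) (x : E) :
    |B x x| ≤ M * ‖x‖ ^ 2 := by
  rcases eq_or_ne x 0 with rfl | hx
  · simp
  have hnx : ‖x‖ ≠ 0 := norm_ne_zero_iff.mpr hx
  have hu := hM (‖x‖⁻¹ • x) (norm_smul_inv_norm hx)
  rw [apply_smul_self, abs_mul, abs_of_nonneg (by positivity), inv_pow] at hu
  rw [inv_mul_le_iff₀ (by positivity)] at hu
  linarith

lemma le_abs_apply_self_normalize_add (hB : B.IsSymm) {M : ℝ}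
    (hM : ∀ w : E, ‖w‖ = 1 → |B w w| ≤ M) {x y : E} (hx : ‖x‖ = 1) (hy : ‖y‖ = 1)
    (hxy : x + y ≠ 0) (h : M ≤ |B x y|) :
    M ≤ |B (‖x + y‖⁻¹ • (x + y)) (‖x + y‖⁻¹ • (x + y))| := by
  set u := ‖x + y‖⁻¹ • (x + y)
  have hpos : 0 < ‖x + y‖ ^ 2 := by positivity
  have hpar : ‖x + y‖ ^ 2 + ‖x - y‖ ^ 2 = 4 := by
    rw [norm_add_sq_real, norm_sub_sq_real, hx, hy]; ring
  have hsum : B (x + y) (x + y) = ‖x + y‖ ^ 2 * B u u := by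
    rw [apply_smul_self, ← mul_assoc, inv_pow, mul_inv_cancel₀ hpos.ne', one_mul]
  have hdiff := abs_apply_self_le_mul_norm_sq hM (x - y)
  have key : 4 * M ≤ ‖x + y‖ ^ 2 * |B u u| + M * ‖x - y‖ ^ 2 := calc
    4 * M ≤ |4 * B x y| := by rw [abs_mul]; norm_num; exact h
    _ = |B (x + y) (x + y) - B (x - y) (x - y)| := by rw [four_mul_apply_eq_sub hB]
    _ ≤ |B (x + y) (x + y)| + |B (x - y) (x - y)| := abs_sub _ _
    _ ≤ ‖x + y‖ ^ 2 * |B u u| + M * ‖x - y‖ ^ 2 := by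
      rw [hsum, abs_mul, abs_of_pos hpos]; linarith
  have : ‖x + y‖ ^ 2 * M ≤ ‖x + y‖ ^ 2 * |B u u| := by
    rw [← hpar] at key; linarith
  exact le_of_mul_le_mul_left this hpos

end LinearMap.BilinForm

lemma forall_norm_update_eq_one {ι E : Type*} [DecidableEq ι] [Norm E] {x : ι → E}
    (hx : ∀ k, ‖x k‖ = 1) (i : ι) {p : E} (hp : ‖p‖ = 1) : ∀ k, ‖update x i p k‖ = 1 :=
  (forall_update_iff x fun _ v => ‖v‖ = 1).2 ⟨hp, fun k _ => hx k⟩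

section UpdateSum

variable {ι E : Type*} [Fintype ι] [DecidableEq ι]

lemma Finset.sum_univ_update [AddCommGroup E] (x : ι → E) (i : ι) (p : E) :
    ∑ k, update x i p k = ∑ k, x k + (p - x i) := by
  rw [Finset.sum_update_of_mem (Finset.mem_univ i), ← Finset.add_sum_erase _ _ (Finset.mem_univ i),
    Finset.sdiff_singleton_eq_erase]
  abel

variable [NormedAddCommGroup E] [InnerProductSpace ℝ E]

lemma norm_sq_le_inner_sum_of_norm_sum_update_neg_le {x : ι → E} {j : ι}
    (h : ‖∑ k, update x j (-x j) k‖ ≤ ‖∑ k, x k‖) : ‖x j‖ ^ 2 ≤ ⟪∑ k, x k, x j⟫ := by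
  rw [Finset.sum_univ_update, ← sq_le_sq₀ (norm_nonneg _) (norm_nonneg _),
    show -x j - x j = -(2 : ℝ) • x j by module, norm_add_sq_real, inner_smul_right, norm_smul,
    mul_pow] at h
  norm_num at h
  linarith

lemma norm_lt_norm_add_smul {s a : E} (ha : 0 < ⟪s, a⟫) {μ : ℝ} (hμ : 0 < μ) :
    ‖s‖ < ‖s + μ • a‖ := by
  rw [← sq_lt_sq₀ (norm_nonneg _) (norm_nonneg _), norm_add_sq_real, inner_smul_right]
  nlinarith [sq_nonneg (μ * ‖a‖), norm_smul μ a]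

lemma norm_sum_lt_norm_sum_update_update_normalize_add {x : ι → E} {i j : ι} (hij : i ≠ j)
    (hi : ‖x i‖ = 1) (hj : ‖x j‖ = 1) (hne : x i ≠ x j) (hs : 0 < ⟪∑ k, x k, x i + x j⟫) :
    ‖∑ k, x k‖ <
      ‖∑ k, update (update x i (‖x i + x j‖⁻¹ • (x i + x j))) j
        (‖x i + x j‖⁻¹ • (x i + x j)) k‖ := by
  set a := x i + x j
  have ha : a ≠ 0 := by rintro h; simp [h] at hs
  have ha2 : ‖a‖ < 2 := by
    have hpar : ‖a‖ ^ 2 + ‖x i - x j‖ ^ 2 = 4 := by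
      rw [norm_add_sq_real, norm_sub_sq_real, hi, hj]; ring
    have : 0 < ‖x i - x j‖ := norm_pos_iff.mpr (sub_ne_zero.mpr hne)
    nlinarith [norm_nonneg a]
  have hsum : ∑ k, update (update x i (‖a‖⁻¹ • a)) j (‖a‖⁻¹ • a) k =
      ∑ k, x k + (2 * ‖a‖⁻¹ - 1) • a := by
    rw [Finset.sum_univ_update, Finset.sum_univ_update, update_of_ne hij.symm]
    module
  rw [hsum]
  refine norm_lt_norm_add_smul hs ?_
  have : 1 < 2 * ‖a‖⁻¹ := by
    rw [← div_eq_mul_inv, one_lt_div (norm_pos_iff.mpr ha)]; exact ha2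
  linarith

end UpdateSum

namespace MultilinearMap

variable {R ι M : Type*} [CommSemiring R] [AddCommMonoid M] [Module R M] [DecidableEq ι]
  (f : MultilinearMap R (fun _ : ι => M) R)

def toBilinForm (x : ι → M) {i j : ι} (hij : i ≠ j) : LinearMap.BilinForm R M :=
  LinearMap.mk₂ R (fun p q => f (update (update x i p) j q))
    (fun p p' q => by
      rw [update_comm hij, update_comm hij, update_comm hij, f.map_update_add])
    (fun c p q => by
      rw [update_comm hij, update_comm hij, f.map_update_smul, smul_eq_mul])
    (fun p q q' => f.map_update_add _ j q q')
    (fun c p q => by rw [f.map_update_smul, smul_eq_mul])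

@[simp]
lemma toBilinForm_apply (x : ι → M) {i j : ι} (hij : i ≠ j) (p q : M) :
    f.toBilinForm x hij p q = f (update (update x i p) j q) := rfl

lemma isSymm_toBilinForm (hf : ∀ (σ : Equiv.Perm ι) (y : ι → M), f (fun k => y (σ k)) = f y)
    (x : ι → M) {i j : ι} (hij : i ≠ j) : (f.toBilinForm x hij).IsSymm := by
  refine ⟨fun p q => ?_⟩
  rw [toBilinForm_apply, toBilinForm_apply, ← hf (Equiv.swap i j)]
  congr 1
  funext k
  rcases eq_or_ne k i with rfl | hki
  · simp [hij]
  rcases eq_or_ne k j with rfl | hkj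
  · simp [hij]
  · simp [Equiv.swap_apply_of_ne_of_ne hki hkj, hki, hkj]

end MultilinearMap

section Extremal

open LinearMap.BilinForm

variable {ι E : Type*} [Fintype ι] [DecidableEq ι] [NormedAddCommGroup E] [InnerProductSpace ℝ E]

theorem MultilinearMap.eq_of_isMaxOn_norm_sum {f : MultilinearMap ℝ (fun _ : ι => E) ℝ}
    (hf : ∀ (σ : Equiv.Perm ι) (y : ι → E), f (fun k => y (σ k)) = f y) {M : ℝ}
    (hM : ∀ y : ι → E, (∀ k, ‖y k‖ = 1) → |f y| ≤ M) {x : ι → E}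
    (hxK : x ∈ {y : ι → E | (∀ k, ‖y k‖ = 1) ∧ |f y| = M})
    (hmax : IsMaxOn (fun y : ι → E => ‖∑ k, y k‖) {y | (∀ k, ‖y k‖ = 1) ∧ |f y| = M} x)
    (i j : ι) : x i = x j := by
  set K := {y : ι → E | (∀ k, ‖y k‖ = 1) ∧ |f y| = M}
  by_contra hne
  have hij : i ≠ j := fun h => hne (h ▸ rfl)
  obtain ⟨hx, hfx⟩ := hxK
  have hflip (k : ι) : 1 ≤ ⟪∑ l, x l, x k⟫ := by
    have hmem : update x k (-x k) ∈ K :=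
      ⟨forall_norm_update_eq_one hx k (by rw [norm_neg, hx k]), by simpa [update_eq_self]⟩
    simpa [hx k] using norm_sq_le_inner_sum_of_norm_sum_update_neg_le (hmax hmem)
  have hs : 0 < ⟪∑ k, x k, x i + x j⟫ := by
    rw [inner_add_right]; linarith [hflip i, hflip j]
  have ha : x i + x j ≠ 0 := by rintro h; simp [h] at hs
  set u := ‖x i + x j‖⁻¹ • (x i + x j)
  have hyu : ∀ k, ‖update (update x i u) j u k‖ = 1 :=
    forall_norm_update_eq_one (forall_norm_update_eq_one hx i (norm_smul_inv_norm ha)) j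
      (norm_smul_inv_norm ha)
  have hfu : M ≤ |f (update (update x i u) j u)| :=
    le_abs_apply_self_normalize_add (f.isSymm_toBilinForm hf x hij)
      (fun w hw => hM _ (forall_norm_update_eq_one (forall_norm_update_eq_one hx i hw) j hw))
      (hx i) (hx j) ha (by simp [update_eq_self, hfx])
  have hyK : update (update x i u) j u ∈ K := ⟨hyu, le_antisymm (hM _ hyu) hfu⟩
  exact (hmax hyK).not_gt
    (norm_sum_lt_norm_sum_update_update_normalize_add hij (hx i) (hx j) hne hs)

end Extremal

theorem max_abs_multilinear_eq_max_abs_on_diagonal_general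
    {n d : ℕ}
    (A : ContinuousMultilinearMap ℝ
      (fun _ : Fin d => EuclideanSpace ℝ (Fin n)) ℝ)
    (hsym : ∀ (σ : Equiv.Perm (Fin d)) (x : Fin d → EuclideanSpace ℝ (Fin n)),
      A (fun i => x (σ i)) = A x)
    (m₁ m₂ : ℝ)
    (h₁ : IsGreatest ((fun x : EuclideanSpace ℝ (Fin n) => |A fun _ => x|) ''
      {x : EuclideanSpace ℝ (Fin n) | ‖x‖ = 1}) m₁)
    (h₂ : IsGreatest ((fun x : Fin d → EuclideanSpace ℝ (Fin n) => |A x|) ''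
      {x : Fin d → EuclideanSpace ℝ (Fin n) | ∀ i, ‖x i‖ = 1}) m₂) :
    m₁ = m₂ := by
  obtain ⟨z, hz, rfl⟩ := h₁.1
  refine le_antisymm (h₂.2 ⟨fun _ => z, fun _ => hz, rfl⟩) ?_
  obtain ⟨x, hxm, rfl⟩ := h₂.1
  set K := {y : Fin d → EuclideanSpace ℝ (Fin n) | (∀ i, ‖y i‖ = 1) ∧ |A y| = |A x|}
  have hK : IsCompact K := by
    refine (?_ : IsCompact {y : Fin d → EuclideanSpace ℝ (Fin n) | ∀ i, ‖y i‖ = 1}).inter_right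
      (isClosed_eq (by fun_prop) continuous_const)
    simpa [Set.pi, mem_sphere_zero_iff_norm] using
      isCompact_univ_pi fun _ : Fin d => isCompact_sphere (0 : EuclideanSpace ℝ (Fin n)) 1
  obtain ⟨y, hyK, hymax⟩ := hK.exists_isMaxOn ⟨x, hxm, rfl⟩
    (continuous_finsetSum _ fun i _ => continuous_apply i).norm.continuousOn
  have hconst := A.toMultilinearMap.eq_of_isMaxOn_norm_sum hsym
    (fun w hw => h₂.2 ⟨w, hw, rfl⟩) hyK hymax
  obtain ⟨c, hc, rfl⟩ : ∃ c : EuclideanSpace ℝ (Fin n), ‖c‖ = 1 ∧ y = fun _ => c := by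
    rcases isEmpty_or_nonempty (Fin d) with _ | ⟨⟨i⟩⟩
    · exact ⟨z, hz, Subsingleton.elim _ _⟩
    · exact ⟨y i, hyK.1 i, funext fun j => hconst j i⟩
  exact h₁.2 ⟨c, hc, hyK.2⟩

theorem max_abs_multilinear_eq_max_abs_on_diagonal
    {n d : ℕ} (hn : 1 ≤ n) (hd : 1 ≤ d)
    (A : ContinuousMultilinearMap ℝ
      (fun _ : Fin d => EuclideanSpace ℝ (Fin n)) ℝ)
    (hsym : ∀ (σ : Equiv.Perm (Fin d)) (x : Fin d → EuclideanSpace ℝ (Fin n)),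
      A (fun i => x (σ i)) = A x)
    (m₁ m₂ : ℝ)
    (h₁ : IsGreatest ((fun x : EuclideanSpace ℝ (Fin n) => |A fun _ => x|) ''
      {x : EuclideanSpace ℝ (Fin n) | ‖x‖ = 1}) m₁)
    (h₂ : IsGreatest ((fun x : Fin d → EuclideanSpace ℝ (Fin n) => |A x|) ''
      {x : Fin d → EuclideanSpace ℝ (Fin n) | ∀ i, ‖x i‖ = 1}) m₂) :
    m₁ = m₂ :=
  max_abs_multilinear_eq_max_abs_on_diagonal_general A hsym m₁ m₂ h₁ h₂
end

section
/- Let A be a symmetric d-linear form on ℝⁿ with d even, and suppose the function x ↦ A[x]^d is concave on ℝⁿ. Then min_{‖x‖=1} A(x,…,x) = min_{‖x₁‖=⋯=‖x_d‖=1} A(x₁,…,x_d). -/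
private lemma aux_nonpos {n d : ℕ} (hd : 2 ≤ d) (hdeven : Even d)
    (A : ContinuousMultilinearMap ℝ
      (fun _ : Fin d => EuclideanSpace ℝ (Fin n)) ℝ)
    (hconc : ConcaveOn ℝ Set.univ
      (fun x : EuclideanSpace ℝ (Fin n) => A fun _ => x)) :
    ∀ x : EuclideanSpace ℝ (Fin n), A (fun _ => x) ≤ 0 := by
  intro x
  have hz : A (fun _ : Fin d => (0 : EuclideanSpace ℝ (Fin n))) = 0 :=
    A.map_coord_zero (⟨0, by omega⟩ : Fin d) rfl
  have heven : A (fun _ => -x) = A (fun _ => x) := by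
    have h := A.toMultilinearMap.map_smul_univ (fun _ : Fin d => (-1:ℝ)) (fun _ => x)
    simp only [ContinuousMultilinearMap.coe_coe, neg_one_smul, Finset.prod_const,
      Finset.card_univ, Fintype.card_fin, smul_eq_mul] at h
    rw [h, hdeven.neg_one_pow, one_mul]
  have hc := hconc.2 (Set.mem_univ x) (Set.mem_univ (-x))
    (by norm_num : (0:ℝ) ≤ 1/2) (by norm_num : (0:ℝ) ≤ 1/2) (by norm_num)
  simp only [smul_neg] at hc
  rw [add_neg_cancel] at hc
  simp only [smul_eq_mul, hz, heven] at hc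
  linarith

private lemma aux_pairwise {n d : ℕ} (hd : 2 ≤ d) (m₂ : ℝ)
    (A : ContinuousMultilinearMap ℝ
      (fun _ : Fin d => EuclideanSpace ℝ (Fin n)) ℝ)
    (hsym : ∀ (σ : Equiv.Perm (Fin d)) (x : Fin d → EuclideanSpace ℝ (Fin n)),
      A (fun i => x (σ i)) = A x)
    (h₂low : ∀ x : Fin d → EuclideanSpace ℝ (Fin n), (∀ i, ‖x i‖ = 1) → m₂ ≤ A x)
    (p : Fin d → EuclideanSpace ℝ (Fin n))
    (hpunit : ∀ i, ‖p i‖ = 1) (hpval : A p = m₂)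
    (hpmax : IsMaxOn (fun x : Fin d → EuclideanSpace ℝ (Fin n) => ‖∑ i, x i‖^2)
        {x | (∀ i, ‖x i‖ = 1) ∧ A x = m₂} p)
    (i j : Fin d) (hij : i ≠ j) :
    p j = p i ∨ p j = -(p i) := by
  classical
  by_contra hcon
  push_neg at hcon
  obtain ⟨hne, hnne⟩ := hcon
  set a : EuclideanSpace ℝ (Fin n) := p i with ha
  set b : EuclideanSpace ℝ (Fin n) := p j with hb
  set X : EuclideanSpace ℝ (Fin n) → EuclideanSpace ℝ (Fin n) → (Fin d → EuclideanSpace ℝ (Fin n)) :=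
    fun u v => Function.update (Function.update p i u) j v with hX
  have hXi : ∀ u v, X u v i = u := by
    intro u v
    simp only [hX]
    rw [Function.update_of_ne hij, Function.update_self]
  have hXj : ∀ u v, X u v j = v := fun u v => Function.update_self _ _ _
  have hXk : ∀ u v k, k ≠ i → k ≠ j → X u v k = p k := by
    intro u v k hki hkj
    simp only [hX]
    rw [Function.update_of_ne hkj, Function.update_of_ne hki]
  have hXunit : ∀ u v, ‖u‖ = 1 → ‖v‖ = 1 → ∀ k, ‖X u v k‖ = 1 := by
    intro u v hu hv k
    rcases eq_or_ne k i with rfl | hki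
    · rw [hXi]; exact hu
    rcases eq_or_ne k j with rfl | hkj
    · rw [hXj]; exact hv
    · rw [hXk _ _ _ hki hkj]; exact hpunit k
  set β : EuclideanSpace ℝ (Fin n) → EuclideanSpace ℝ (Fin n) → ℝ := fun u v => A (X u v) with hβ
  have hXab : X a b = p := by
    simp only [hX, ha, hb]
    rw [Function.update_eq_self, Function.update_eq_self]
  have hβab : β a b = m₂ := by rw [hβ]; simp only [hXab]; exact hpval
  have hβlow : ∀ u v, ‖u‖ = 1 → ‖v‖ = 1 → m₂ ≤ β u v := fun u v hu hv =>
    h₂low _ (hXunit u v hu hv)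
  have hβsym : ∀ u v, β u v = β v u := by
    intro u v
    have hswap : (fun k => X u v (Equiv.swap i j k)) = X v u := by
      funext k
      rcases eq_or_ne k i with rfl | hki
      · rw [Equiv.swap_apply_left, hXj, hXi]
      rcases eq_or_ne k j with rfl | hkj
      · rw [Equiv.swap_apply_right, hXi, hXj]
      · rw [Equiv.swap_apply_of_ne_of_ne hki hkj, hXk _ _ _ hki hkj, hXk _ _ _ hki hkj]
    calc β u v = A (fun k => X u v (Equiv.swap i j k)) := (hsym (Equiv.swap i j) (X u v)).symm
    _ = A (X v u) := by rw [hswap]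
  have hβaddr : ∀ u v w, β u (v + w) = β u v + β u w := by
    intro u v w
    exact A.map_update_add (Function.update p i u) j v w
  have hβsmulr : ∀ (r : ℝ) u v, β u (r • v) = r * β u v := by
    intro r u v
    exact A.map_update_smul (Function.update p i u) j r v
  have hβaddl : ∀ u v w, β (u + w) v = β u v + β w v := by
    intro u v w
    rw [hβsym, hβaddr, hβsym v u, hβsym v w]
  have hβsmull : ∀ (r : ℝ) u v, β (r • u) v = r * β u v := by
    intro r u v
    rw [hβsym, hβsmulr, hβsym]
  have hβnegr : ∀ u v, β u (-v) = -(β u v) := by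
    intro u v
    rw [← neg_one_smul ℝ v, hβsmulr]; ring
  have hβnegl : ∀ u v, β (-u) v = -(β u v) := by
    intro u v
    rw [← neg_one_smul ℝ u, hβsmull]; ring
  -- c and e
  set c : EuclideanSpace ℝ (Fin n) := a + b with hc
  set e : EuclideanSpace ℝ (Fin n) := a - b with he
  have hcne : c ≠ 0 := by
    intro h0
    exact hnne (eq_neg_of_add_eq_zero_right h0)
  have hene : e ≠ 0 := sub_ne_zero.mpr (Ne.symm hne)
  have hnc : (0:ℝ) < ‖c‖ := norm_pos_iff.mpr hcne
  have hne' : (0:ℝ) < ‖e‖ := norm_pos_iff.mpr hene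
  have hna : ‖a‖ = 1 := by rw [ha]; exact hpunit i
  have hnb : ‖b‖ = 1 := by rw [hb]; exact hpunit j
  have hpar : ‖c‖^2 + ‖e‖^2 = 4 := by
    have h1 := norm_add_sq_real a b
    have h2 := norm_sub_sq_real a b
    rw [hc, he, h1, h2, hna, hnb]; ring
  have hclt2 : ‖c‖ < 2 := by nlinarith
  -- scaling lower bounds
  have hcc : m₂ * ‖c‖^2 ≤ β c c := by
    have hcu : ‖(‖c‖⁻¹ • c : EuclideanSpace ℝ (Fin n))‖ = 1 := norm_smul_inv_norm hcne
    have h1 : m₂ ≤ ‖c‖⁻¹ * (‖c‖⁻¹ * β c c) := by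
      have := hβlow _ _ hcu hcu
      rwa [hβsmull, hβsmulr] at this
    have h2 := mul_le_mul_of_nonneg_left h1 (sq_nonneg ‖c‖)
    have h3 : ‖c‖^2 * (‖c‖⁻¹ * (‖c‖⁻¹ * β c c)) = β c c := by
      field_simp
    rw [h3] at h2
    linarith [h2]
  have hee : m₂ * ‖e‖^2 ≤ -(β e e) := by
    have heu : ‖(‖e‖⁻¹ • e : EuclideanSpace ℝ (Fin n))‖ = 1 := norm_smul_inv_norm hene
    have heu' : ‖(-(‖e‖⁻¹ • e) : EuclideanSpace ℝ (Fin n))‖ = 1 := by rw [norm_neg]; exact heu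
    have h1 : m₂ ≤ ‖e‖⁻¹ * (‖e‖⁻¹ * -(β e e)) := by
      have h0 := hβlow _ _ heu heu'
      rw [hβnegr, hβsmull, hβsmulr] at h0
      rw [show ‖e‖⁻¹ * (‖e‖⁻¹ * -(β e e)) = -(‖e‖⁻¹ * (‖e‖⁻¹ * β e e)) from by ring]
      exact h0
    have h2 := mul_le_mul_of_nonneg_left h1 (sq_nonneg ‖e‖)
    have h3 : ‖e‖^2 * (‖e‖⁻¹ * (‖e‖⁻¹ * -(β e e))) = -(β e e) := by
      field_simp
    rw [h3] at h2
    linarith [h2]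
  -- polarization
  have hpol : β c c - β e e = 4 * m₂ := by
    have h1 : β c c = β a a + β a b + β a b + β b b := by
      rw [hc, hβaddl, hβaddr, hβaddr, hβsym b a]; ring
    have h2 : β e e = β a a - β a b - β a b + β b b := by
      rw [he, sub_eq_add_neg]
      simp only [hβaddl, hβaddr, hβnegl, hβnegr]
      rw [hβsym b a]; ring
    rw [h1, h2, hβab]; ring
  have hccEq : β c c = m₂ * ‖c‖^2 := by
    have h4 : m₂ * ‖c‖^2 + m₂ * ‖e‖^2 = 4 * m₂ := by rw [← mul_add, hpar]; ring
    linarith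
  -- sum decomposition
  have hsumX : ∀ u v, ∑ k, X u v k = (∑ k, p k) - a - b + u + v := by
    intro u v
    have hptwise : ∀ k, X u v k = p k + ((if k = i then u - a else 0) + (if k = j then v - b else 0)) := by
      intro k
      rcases eq_or_ne k i with rfl | hki
      · rw [hXi, if_pos rfl, if_neg hij]
        rw [ha]; abel
      rcases eq_or_ne k j with rfl | hkj
      · rw [hXj, if_neg hki, if_pos rfl]
        rw [hb]; abel
      · rw [hXk _ _ _ hki hkj, if_neg hki, if_neg hkj]
        abel
    have hsum1 : ∑ k, X u v k = (∑ k, p k) + ((∑ k : Fin d, if k = i then u - a else 0)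
        + (∑ k : Fin d, if k = j then v - b else 0)) := by
      rw [← Finset.sum_add_distrib, ← Finset.sum_add_distrib]
      exact Finset.sum_congr rfl fun k _ => hptwise k
    rw [hsum1, Finset.sum_ite_eq' Finset.univ i (fun _ => u - a),
      Finset.sum_ite_eq' Finset.univ j (fun _ => v - b), if_pos (Finset.mem_univ i),
      if_pos (Finset.mem_univ j)]
    abel
  set S : EuclideanSpace ℝ (Fin n) := ∑ k, p k with hS
  have main : ∀ σ : ℝ, (σ = 1 ∨ σ = -1) → 0 ≤ σ * (inner ℝ S c : ℝ) → False := by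
    intro σ hσ hσS
    have hσsq : σ * σ = 1 := by rcases hσ with rfl | rfl <;> norm_num
    have hσabs : |σ| = 1 := by rcases hσ with rfl | rfl <;> norm_num
    set r : ℝ := σ * ‖c‖⁻¹ with hr
    set u : EuclideanSpace ℝ (Fin n) := r • c with hu
    have hun : ‖u‖ = 1 := by
      rw [hu, norm_smul, Real.norm_eq_abs, hr, abs_mul, abs_inv, abs_norm, hσabs]
      field_simp
    set t : ℝ := 2 * r - 1 with htdef
    have h9 : ‖c‖⁻¹ * ‖c‖ = 1 := inv_mul_cancel₀ hnc.ne'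
    have htc : t * ‖c‖ = 2 * σ - ‖c‖ := by
      rw [htdef, hr]
      calc (2 * (σ * ‖c‖⁻¹) - 1) * ‖c‖ = 2 * σ * (‖c‖⁻¹ * ‖c‖) - ‖c‖ := by ring
      _ = 2 * σ - ‖c‖ := by rw [h9]; ring
    have htne : t ≠ 0 := by
      intro h0
      rw [h0, zero_mul] at htc
      rcases hσ with h1 | h1 <;> rw [h1] at htc <;> linarith
    have htS : 0 ≤ t * (inner ℝ S c : ℝ) := by
      rcases hσ with h1 | h1
      · rw [h1] at htc hσS
        have ht0 : 0 < t := by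
          by_contra hge
          push_neg at hge
          have hXX : t * ‖c‖ ≤ 0 := mul_nonpos_iff.mpr (Or.inr ⟨hge, hnc.le⟩)
          linarith
        rw [one_mul] at hσS
        exact mul_nonneg ht0.le hσS
      · rw [h1] at htc hσS
        have ht0 : t < 0 := by
          by_contra hge
          push_neg at hge
          have hXX : 0 ≤ t * ‖c‖ := mul_nonneg hge hnc.le
          linarith
        have hip : (inner ℝ S c : ℝ) ≤ 0 := by linarith
        exact mul_nonneg_iff.mpr (Or.inr ⟨ht0.le, hip⟩)
    have hyval : A (X u u) = m₂ := by
      have h1 : β u u = r * (r * β c c) := by rw [hu, hβsmull, hβsmulr]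
      have h2 : β u u = m₂ := by
        rw [h1, hccEq, hr]
        calc σ * ‖c‖⁻¹ * (σ * ‖c‖⁻¹ * (m₂ * ‖c‖ ^ 2))
            = (σ * σ) * ((‖c‖⁻¹ * ‖c‖) * ((‖c‖⁻¹ * ‖c‖) * m₂)) := by ring
        _ = m₂ := by rw [hσsq, h9]; ring
      exact h2
    have hyK : X u u ∈ {x : Fin d → EuclideanSpace ℝ (Fin n) | (∀ i, ‖x i‖ = 1) ∧ A x = m₂} :=
      ⟨hXunit u u hun hun, hyval⟩
    have hle : ‖∑ k, X u u k‖^2 ≤ ‖S‖^2 := hpmax hyK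
    have hsum : ∑ k, X u u k = S + t • c := by
      rw [hsumX u u, hu, htdef, hc]
      module
    rw [hsum] at hle
    have hΦy : ‖S + t • c‖^2 = ‖S‖^2 + 2*(t * (inner ℝ S c : ℝ)) + t^2 * ‖c‖^2 := by
      rw [norm_add_sq_real, real_inner_smul_right, norm_smul, Real.norm_eq_abs, mul_pow, sq_abs]
    rw [hΦy] at hle
    have ht2 : 0 < t^2 := by
      rcases htne.lt_or_gt with h | h
      · rw [pow_two]; exact mul_pos_of_neg_of_neg h h
      · rw [pow_two]; exact mul_pos h h
    have hc2 : 0 < ‖c‖^2 := by rw [pow_two]; exact mul_pos hnc hnc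
    have hfin := mul_pos ht2 hc2
    linarith
  rcases le_or_gt 0 (inner ℝ S c : ℝ) with h | h
  · exact main 1 (Or.inl rfl) (by rw [one_mul]; exact h)
  · exact main (-1) (Or.inr rfl) (by linarith)

theorem min_concave_multilinear_eq_min_on_diagonal
    {n d : ℕ} (hn : 1 ≤ n) (hd : 2 ≤ d) (hdeven : Even d)
    (A : ContinuousMultilinearMap ℝ
      (fun _ : Fin d => EuclideanSpace ℝ (Fin n)) ℝ)
    (hsym : ∀ (σ : Equiv.Perm (Fin d)) (x : Fin d → EuclideanSpace ℝ (Fin n)),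
      A (fun i => x (σ i)) = A x)
    (hconc : ConcaveOn ℝ Set.univ
      (fun x : EuclideanSpace ℝ (Fin n) => A fun _ => x))
    (m₁ m₂ : ℝ)
    (h₁ : IsLeast ((fun x : EuclideanSpace ℝ (Fin n) => A fun _ => x) ''
      {x : EuclideanSpace ℝ (Fin n) | ‖x‖ = 1}) m₁)
    (h₂ : IsLeast ((fun x : Fin d → EuclideanSpace ℝ (Fin n) => A x) ''
      {x : Fin d → EuclideanSpace ℝ (Fin n) | ∀ i, ‖x i‖ = 1}) m₂) :
    m₁ = m₂ := by
  classical
  obtain ⟨x₀, hx₀norm, hx₀val⟩ := h₁.1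
  have hf0 : ∀ x : EuclideanSpace ℝ (Fin n), A (fun _ => x) ≤ 0 :=
    aux_nonpos hd hdeven A hconc
  have hm1le : m₁ ≤ 0 := hx₀val ▸ hf0 x₀
  have hm2le : m₂ ≤ m₁ := h₂.2 ⟨fun _ => x₀, fun _ => hx₀norm, hx₀val⟩
  have h₂low : ∀ x : Fin d → EuclideanSpace ℝ (Fin n), (∀ i, ‖x i‖ = 1) → m₂ ≤ A x :=
    fun x hx => h₂.2 ⟨x, hx, rfl⟩
  have h₁low : ∀ v : EuclideanSpace ℝ (Fin n), ‖v‖ = 1 → m₁ ≤ A (fun _ => v) :=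
    fun v hv => h₁.2 ⟨v, hv, rfl⟩
  -- compactness: pick a minimizer maximizing ‖∑ xᵢ‖²
  set K : Set (Fin d → EuclideanSpace ℝ (Fin n)) := {x | (∀ i, ‖x i‖ = 1) ∧ A x = m₂} with hK
  have hKeq : K = (Set.univ.pi fun _ : Fin d => Metric.sphere (0 : EuclideanSpace ℝ (Fin n)) 1)
      ∩ (⇑A ⁻¹' {m₂}) := by
    ext x
    simp [hK, Set.mem_pi, mem_sphere_iff_norm, sub_zero]
  have hKc : IsCompact K := by
    rw [hKeq]
    exact (isCompact_univ_pi fun _ => isCompact_sphere 0 1).inter_right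
      (isClosed_singleton.preimage A.cont)
  have hKne : K.Nonempty := by
    obtain ⟨xm, hxm, hAxm⟩ := h₂.1
    exact ⟨xm, hxm, hAxm⟩
  have hΦ : Continuous fun x : Fin d → EuclideanSpace ℝ (Fin n) => ‖∑ i, x i‖^2 :=
    ((continuous_finset_sum _ fun i _ => continuous_apply i).norm).pow 2
  obtain ⟨p, hpK, hpmax⟩ := hKc.exists_isMaxOn hKne hΦ.continuousOn
  obtain ⟨hpunit, hpval⟩ := hpK
  have key : ∀ i j : Fin d, i ≠ j → p j = p i ∨ p j = -(p i) :=
    fun i j hij => aux_pairwise hd m₂ A hsym h₂low p hpunit hpval hpmax i j hij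
  -- all coordinates are ± p i0
  set i0 : Fin d := ⟨0, by omega⟩ with hi0
  set v : EuclideanSpace ℝ (Fin n) := p i0 with hv
  have hvunit : ‖v‖ = 1 := hpunit i0
  set ε : Fin d → ℝ := fun k => if p k = v then 1 else -1 with hε
  have hεv : ∀ k, p k = ε k • v := by
    intro k
    by_cases h : p k = v
    · simp only [hε, if_pos h, one_smul]; exact h
    · have hk0 : k ≠ i0 := fun h' => h (by rw [h', hv])
      rcases key i0 k (Ne.symm hk0) with h1 | h1
      · exact absurd (hv ▸ h1) h
      · simp only [hε, if_neg h, neg_smul, one_smul]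
        rw [h1, hv]
  have hAp : A p = (∏ k, ε k) * A (fun _ => v) := by
    have h1 : A p = A (fun k => ε k • v) := by
      congr 1
      funext k
      exact hεv k
    rw [h1]
    have h2 := A.toMultilinearMap.map_smul_univ ε (fun _ => v)
    simpa using h2
  have hprod : (∏ k, ε k) = 1 ∨ (∏ k, ε k) = -1 := by
    apply mul_self_eq_one_iff.mp
    rw [← Finset.prod_mul_distrib]
    apply Finset.prod_eq_one
    intro k _
    simp only [hε]
    split_ifs <;> norm_num
  rcases hprod with h | h
  · rw [h, one_mul] at hAp
    have h3 := h₁low v hvunit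
    rw [← hAp, hpval] at h3
    linarith
  · rw [h] at hAp
    have h4 := hf0 v
    have h5 : m₂ = -1 * A (fun _ => v) := by rw [← hpval, hAp]
    linarith
end

section
/- Let {t^{(k)}} be a PAM sequence for h_α. Then for every k, h_α(t^{(k+1)}) + (γ̄/2)‖t^{(k+1)} − t^{(k)}‖² ≤ h_α(t^{(k)}). Consequently the sequence {h_α(t^{(k)})} is nonincreasing and convergent, and Σ_{k=1}^∞ ‖t^{(k+1)} − t^{(k)}‖² < ∞. -/
open scoped RealInnerProductSpace

/-- The function `h_α(x₁,…,x_d) = A(x₁,…,x_d) − α⟨x₁,x₂⟩⟨x₃,x₄⟩⋯⟨x_{d−1},x_d⟩`. -/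
noncomputable def hAlpha {n : ℕ} (e d : ℕ) (hd : d = 2 * e)
    (A : ContinuousMultilinearMap ℝ
      (fun _ : Fin d => EuclideanSpace ℝ (Fin n)) ℝ)
    (α : ℝ) (t : Fin d → EuclideanSpace ℝ (Fin n)) : ℝ :=
  A t - α * ∏ j : Fin e,
    ⟪t ⟨2 * j.val, by omega⟩, t ⟨2 * j.val + 1, by omega⟩⟫

/-- A PAM (proximal alternating minimization) sequence on `S^d`,
`S` the unit sphere: `t^{(k+1)}_i` minimizes, over the unit sphere, the map
`x ↦ h_α(t^{(k+1)}_1,…,t^{(k+1)}_{i−1}, x, t^{(k)}_{i+1},…,t^{(k)}_d)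
  + (γ_i/2)‖x − t^{(k)}_i‖²`. -/
def IsPAMSeq {n : ℕ} (e d : ℕ) (hd : d = 2 * e)
    (A : ContinuousMultilinearMap ℝ
      (fun _ : Fin d => EuclideanSpace ℝ (Fin n)) ℝ)
    (α : ℝ) (γ : Fin d → ℝ)
    (t : ℕ → Fin d → EuclideanSpace ℝ (Fin n)) : Prop :=
  (∀ (k : ℕ) (i : Fin d), ‖t k i‖ = 1) ∧
  ∀ (k : ℕ) (i : Fin d) (x : EuclideanSpace ℝ (Fin n)), ‖x‖ = 1 →
    hAlpha e d hd A α
        (fun j => if j < i then t (k + 1) j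
          else if j = i then t (k + 1) i else t k j)
      + γ i / 2 * ‖t (k + 1) i - t k i‖ ^ 2
    ≤ hAlpha e d hd A α
        (fun j => if j < i then t (k + 1) j
          else if j = i then x else t k j)
      + γ i / 2 * ‖x - t k i‖ ^ 2

theorem pam_sufficient_decrease
    {n e d : ℕ} (hn : 1 ≤ n) (he : 1 ≤ e) (hd : d = 2 * e)
    (A : ContinuousMultilinearMap ℝ
      (fun _ : Fin d => EuclideanSpace ℝ (Fin n)) ℝ)
    (hsym : ∀ (σ : Equiv.Perm (Fin d)) (x : Fin d → EuclideanSpace ℝ (Fin n)),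
      A (fun i => x (σ i)) = A x)
    (α : ℝ) (hα : 0 < α)
    (γ : Fin d → ℝ) (hγ : ∀ i, 0 < γ i)
    (γbar : ℝ) (hγbar : IsLeast (Set.range γ) γbar)
    (t : ℕ → Fin d → EuclideanSpace ℝ (Fin n))
    (ht : IsPAMSeq e d hd A α γ t) :
    (∀ k : ℕ, hAlpha e d hd A α (t (k + 1))
        + γbar / 2 * (∑ i, ‖t (k + 1) i - t k i‖ ^ 2)
      ≤ hAlpha e d hd A α (t k)) ∧
    Antitone (fun k => hAlpha e d hd A α (t k)) ∧
    (∃ L : ℝ, Filter.Tendsto (fun k => hAlpha e d hd A α (t k))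
      Filter.atTop (nhds L)) ∧
    Summable (fun k : ℕ => ∑ i, ‖t (k + 1) i - t k i‖ ^ 2) := by
  obtain ⟨hS, hmin⟩ := ht
  -- positivity of γbar
  have hγbarpos : 0 < γbar := by
    obtain ⟨i0, hi0⟩ := hγbar.1
    rw [← hi0]; exact hγ i0
  -- lower bound for hAlpha on the sphere
  have hlow : ∀ v : Fin d → EuclideanSpace ℝ (Fin n), (∀ i, ‖v i‖ = 1) →
      -(‖A‖ + α) ≤ hAlpha e d hd A α v := by
    intro v hv
    have hA : |A v| ≤ ‖A‖ := by
      have h1 := A.le_opNorm v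
      simpa [hv, Real.norm_eq_abs] using h1
    have hP : |∏ j : Fin e, ⟪v ⟨2 * j.val, by omega⟩, v ⟨2 * j.val + 1, by omega⟩⟫| ≤ 1 := by
      rw [Finset.abs_prod]
      calc ∏ j : Fin e, |⟪v ⟨2 * j.val, by omega⟩, v ⟨2 * j.val + 1, by omega⟩⟫|
          ≤ ∏ _j : Fin e, (1 : ℝ) := by
            refine Finset.prod_le_prod (fun _ _ => abs_nonneg _) (fun j _ => ?_)
            have h2 := abs_real_inner_le_norm
              (v ⟨2 * j.val, by omega⟩) (v ⟨2 * j.val + 1, by omega⟩)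
            simpa [hv] using h2
        _ = 1 := by simp
    unfold hAlpha
    set P := ∏ j : Fin e, ⟪v ⟨2 * j.val, by omega⟩, v ⟨2 * j.val + 1, by omega⟩⟫ with hPdef
    nlinarith [neg_abs_le (A v), le_abs_self P, hα.le, hP, hA]
  -- the key per-step decrease with all γ i
  have key : ∀ k : ℕ, hAlpha e d hd A α (t (k + 1))
      + ∑ i, γ i / 2 * ‖t (k + 1) i - t k i‖ ^ 2 ≤ hAlpha e d hd A α (t k) := by
    intro k
    set u : ℕ → Fin d → EuclideanSpace ℝ (Fin n) :=
      fun m j => if (j : ℕ) < m then t (k + 1) j else t k j with hu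
    have hu0 : u 0 = t k := funext fun j => by simp [hu]
    have hud : u d = t (k + 1) := funext fun j => by simp [hu, j.isLt]
    have step : ∀ i : Fin d,
        hAlpha e d hd A α (u (i.val + 1)) + γ i / 2 * ‖t (k + 1) i - t k i‖ ^ 2
          ≤ hAlpha e d hd A α (u i.val) := by
      intro i
      have h := hmin k i (t k i) (hS k i)
      have e1 : (fun j => if j < i then t (k + 1) j
          else if j = i then t (k + 1) i else t k j) = u (i.val + 1) := by
        funext j
        rcases lt_trichotomy j i with h1 | h1 | h1
        · have : (j : ℕ) < i.val + 1 := Nat.lt_succ_of_lt (Fin.lt_def.mp h1)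
          simp [hu, h1, this]
        · subst h1
          simp [hu]
        · have h2 : ¬ j < i := not_lt_of_gt h1
          have h3 : j ≠ i := ne_of_gt h1
          have h4 : ¬ (j : ℕ) < i.val + 1 := by
            have := Fin.lt_def.mp h1; omega
          simp [hu, h2, h3, h4]
      have e2 : (fun j => if j < i then t (k + 1) j
          else if j = i then t k i else t k j) = u i.val := by
        funext j
        rcases lt_trichotomy j i with h1 | h1 | h1
        · simp [hu, h1, Fin.lt_def.mp h1]
        · subst h1
          simp [hu]
        · have h2 : ¬ j < i := not_lt_of_gt h1
          have h3 : j ≠ i := ne_of_gt h1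
          have h4 : ¬ (j : ℕ) < i.val := by
            have := Fin.lt_def.mp h1; omega
          simp [hu, h2, h3, h4]
      rw [e1, e2] at h
      simpa using h
    have main : ∀ m : ℕ, m ≤ d →
        hAlpha e d hd A α (u m)
          + ∑ i ∈ Finset.univ.filter (fun i : Fin d => i.val < m),
              γ i / 2 * ‖t (k + 1) i - t k i‖ ^ 2
          ≤ hAlpha e d hd A α (u 0) := by
      intro m
      induction m with
      | zero => intro _; simp
      | succ m ih =>
        intro hm
        have hmd : m < d := hm
        have ihm := ih (Nat.le_of_lt hmd)
        set i : Fin d := ⟨m, hmd⟩ with hi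
        have hstep := step i
        have hfilter : Finset.univ.filter (fun j : Fin d => j.val < m + 1)
            = insert i (Finset.univ.filter (fun j : Fin d => j.val < m)) := by
          ext j
          simp only [Finset.mem_filter, Finset.mem_insert, Finset.mem_univ, true_and]
          constructor
          · intro hj
            rcases Nat.lt_succ_iff_lt_or_eq.mp hj with h | h
            · exact Or.inr h
            · exact Or.inl (Fin.ext h)
          · rintro (rfl | h)
            · exact Nat.lt_succ_self m
            · exact Nat.lt_succ_of_lt h
        have hnotmem : i ∉ Finset.univ.filter (fun j : Fin d => j.val < m) := by
          simp [hi]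
        rw [hfilter, Finset.sum_insert hnotmem]
        have hui : u (i.val + 1) = u (m + 1) := by rw [hi]
        have hui' : u (i.val : ℕ) = u m := by rw [hi]
        rw [hui, hui'] at hstep
        linarith
    have hfin := main d le_rfl
    have hall : Finset.univ.filter (fun i : Fin d => i.val < d) = Finset.univ := by
      ext j; simp [j.isLt]
    rw [hall, hud, hu0] at hfin
    exact hfin
  -- the first claim
  have claim1 : ∀ k : ℕ, hAlpha e d hd A α (t (k + 1))
      + γbar / 2 * (∑ i, ‖t (k + 1) i - t k i‖ ^ 2) ≤ hAlpha e d hd A α (t k) := by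
    intro k
    have hle : γbar / 2 * (∑ i, ‖t (k + 1) i - t k i‖ ^ 2)
        ≤ ∑ i, γ i / 2 * ‖t (k + 1) i - t k i‖ ^ 2 := by
      rw [Finset.mul_sum]
      refine Finset.sum_le_sum (fun i _ => ?_)
      have hγi : γbar ≤ γ i := hγbar.2 ⟨i, rfl⟩
      have hnn : (0 : ℝ) ≤ ‖t (k + 1) i - t k i‖ ^ 2 := sq_nonneg _
      nlinarith
    linarith [key k]
  have hsumnn : ∀ k : ℕ, (0 : ℝ) ≤ ∑ i, ‖t (k + 1) i - t k i‖ ^ 2 := fun k =>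
    Finset.sum_nonneg (fun i _ => sq_nonneg _)
  -- antitone
  have hanti : Antitone (fun k => hAlpha e d hd A α (t k)) := by
    refine antitone_nat_of_succ_le (fun k => ?_)
    have h1 := claim1 k
    have h2 : 0 ≤ γbar / 2 * (∑ i, ‖t (k + 1) i - t k i‖ ^ 2) := by
      have := hsumnn k
      positivity
    linarith
  -- bounded below
  have hbdd : ∀ k, -(‖A‖ + α) ≤ hAlpha e d hd A α (t k) := fun k => hlow (t k) (hS k)
  refine ⟨claim1, hanti, ?_, ?_⟩
  · refine ⟨⨅ k, hAlpha e d hd A α (t k), ?_⟩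
    exact tendsto_atTop_ciInf hanti ⟨-(‖A‖ + α), by rintro x ⟨k, rfl⟩; exact hbdd k⟩
  · -- summability via bounded partial sums
    have tele : ∀ N : ℕ, γbar / 2 * ∑ k ∈ Finset.range N, (∑ i, ‖t (k + 1) i - t k i‖ ^ 2)
        ≤ hAlpha e d hd A α (t 0) - hAlpha e d hd A α (t N) := by
      intro N
      induction N with
      | zero => simp
      | succ N ih =>
        rw [Finset.sum_range_succ, mul_add]
        have := claim1 N
        linarith
    refine summable_of_sum_range_le (c := (2 / γbar) * (hAlpha e d hd A α (t 0) + ‖A‖ + α))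
      hsumnn (fun N => ?_)
    have h1 := tele N
    have h2 := hbdd N
    set S := ∑ k ∈ Finset.range N, (∑ i, ‖t (k + 1) i - t k i‖ ^ 2) with hSdef
    have h3 : γbar / 2 * S ≤ hAlpha e d hd A α (t 0) + ‖A‖ + α := by linarith
    have h4 : S = (2 / γbar) * (γbar / 2 * S) := by
      have hne : γbar ≠ 0 := ne_of_gt hγbarpos
      field_simp
    calc S = (2 / γbar) * (γbar / 2 * S) := h4
      _ ≤ (2 / γbar) * (hAlpha e d hd A α (t 0) + ‖A‖ + α) :=
          mul_le_mul_of_nonneg_left h3 (by positivity)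
end
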